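/- arXiv:1410.1487 — 3 statements merged into one kernel-verified Lean document; each statement's English description precedes it below -/
import Mathlib

section
/- For any smooth function w on (0,∞) and any positive integer l, the operator D_l defined by (D_l w)(r) = r^{l+1} (r^{-1} d/dr)^l (w(r)/r) satisfies the intertwining relation T_l (D_l w) = D_l (T_0 w), where T_l = -d²/dr² + l(l+1)/r² and T_0 = -d²/dr². -/
open Complex

/-- The operator `D_l w (r) = r^{l+1} ((1/r) d/dr)^l (w(r)/r)`. -/
noncomputable def Dop (l : ℕ) (w : ℝ → ℂ) : ℝ → ℂ :=
  fun r => (r : ℂ) ^ (l + 1) *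
    ((fun f : ℝ → ℂ => fun r => (r : ℂ)⁻¹ * deriv f r)^[l] (fun r => w r / r)) r

/-- The operator `T_l u = -u'' + l(l+1)/r² u`. -/
noncomputable def Tl (l : ℕ) (u : ℝ → ℂ) : ℝ → ℂ :=
  fun r => -(deriv (deriv u) r) + ((l : ℂ) * (l + 1) / (r : ℂ) ^ 2) * u r

open Set

noncomputable def Sop : (ℝ → ℂ) → ℝ → ℂ := fun f r => (r : ℂ)⁻¹ * deriv f r

lemma contDiffOn_coe : ContDiffOn ℝ (⊤ : ℕ∞) (fun t : ℝ => (t:ℂ)) (Ioi (0:ℝ)) :=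
  Complex.ofRealCLM.contDiff.contDiffOn

lemma hasDerivAt_pow_coe (k : ℕ) (s : ℝ) :
    HasDerivAt (fun t : ℝ => (t:ℂ)^(k+1)) (((k:ℂ)+1) * (s:ℂ)^k) s := by
  have := (hasDerivAt_pow (k+1) ((s:ℂ))).comp_ofReal
  simpa using this

lemma smooth_deriv {f : ℝ → ℂ} (hf : ContDiffOn ℝ (⊤ : ℕ∞) f (Ioi (0:ℝ))) :
    ContDiffOn ℝ (⊤ : ℕ∞) (deriv f) (Ioi 0) :=
  hf.deriv_of_isOpen isOpen_Ioi (by simp)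

lemma hda {f : ℝ → ℂ} {r : ℝ} (hf : ContDiffOn ℝ (⊤ : ℕ∞) f (Ioi (0:ℝ))) (hr : r ∈ Ioi (0:ℝ)) :
    HasDerivAt f (deriv f r) r :=
  ((hf.contDiffAt (isOpen_Ioi.mem_nhds hr)).differentiableAt (by simp)).hasDerivAt

lemma smooth_G {w : ℝ → ℂ} (hw : ContDiffOn ℝ (⊤ : ℕ∞) w (Ioi (0:ℝ))) (l : ℕ) :
    ContDiffOn ℝ (⊤ : ℕ∞) (Sop^[l] (fun r => w r / r)) (Ioi 0) := by
  have hne : ∀ x ∈ Ioi (0:ℝ), (x:ℂ) ≠ 0 :=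
    fun x hx => Complex.ofReal_ne_zero.mpr (ne_of_gt hx)
  induction l with
  | zero =>
    simp only [Function.iterate_zero_apply, div_eq_mul_inv]
    exact hw.mul (contDiffOn_coe.inv hne)
  | succ n ih =>
    rw [Function.iterate_succ_apply']
    exact (contDiffOn_coe.inv hne).mul (smooth_deriv ih)

lemma Dop_eq (l : ℕ) (w : ℝ → ℂ) :
    Dop l w = fun r : ℝ => (r : ℂ) ^ (l + 1) * Sop^[l] (fun r => w r / r) r := rfl

lemma smooth_Dop {w : ℝ → ℂ} (hw : ContDiffOn ℝ (⊤ : ℕ∞) w (Ioi (0:ℝ))) (l : ℕ) :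
    ContDiffOn ℝ (⊤ : ℕ∞) (Dop l w) (Ioi 0) := by
  rw [Dop_eq]
  exact (contDiffOn_coe.pow _).mul (smooth_G hw l)

lemma aux_hda (c : ℂ) (k : ℕ) {f : ℝ → ℂ} {f' : ℂ} {s : ℝ} (hs : s ≠ 0)
    (hf : HasDerivAt f f' s) :
    HasDerivAt (fun t : ℝ => c * ((t:ℂ)^(k+1))⁻¹ * f t)
      (c * ((s:ℂ)^(k+1))⁻¹ * f' - c * ((k:ℂ)+1) * ((s:ℂ)^(k+2))⁻¹ * f s) s := by
  have hx : (s:ℂ) ≠ 0 := Complex.ofReal_ne_zero.mpr hs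
  have h1 : HasDerivAt (fun z : ℂ => (z^(k+1))⁻¹)
      (-(((k:ℂ)+1) * (s:ℂ)^k) / ((s:ℂ)^(k+1))^2) (s:ℂ) := by
    have := (hasDerivAt_pow (k+1) ((s:ℂ))).inv (pow_ne_zero _ hx)
    simp at this
    exact this
  have h2 := ((h1.comp_ofReal.const_mul c).mul hf)
  convert h2 using 1
  · rfl
  · rfl
  field_simp
  ring

lemma Dop_succ {w : ℝ → ℂ} (hw : ContDiffOn ℝ (⊤ : ℕ∞) w (Ioi (0:ℝ))) (l : ℕ) {r : ℝ}
    (hr : r ∈ Ioi (0:ℝ)) :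
    Dop (l+1) w r = deriv (Dop l w) r - ((l:ℂ)+1) * ((r:ℂ)^1)⁻¹ * Dop l w r := by
  have hx : (r:ℂ) ≠ 0 := Complex.ofReal_ne_zero.mpr (ne_of_gt hr)
  set G : ℝ → ℂ := Sop^[l] (fun r => w r / r) with hGdef
  have hG : ContDiffOn ℝ (⊤ : ℕ∞) G (Ioi 0) := smooth_G hw l
  have hGd : HasDerivAt G (deriv G r) r := hda hG hr
  have hprod : HasDerivAt (fun s : ℝ => (s:ℂ)^(l+1) * G s)
      (((l:ℂ)+1) * (r:ℂ)^l * G r + (r:ℂ)^(l+1) * deriv G r) r :=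
    (hasDerivAt_pow_coe l r).mul hGd
  have hder : deriv (Dop l w) r
      = ((l:ℂ)+1) * (r:ℂ)^l * G r + (r:ℂ)^(l+1) * deriv G r := by
    rw [Dop_eq]; exact hprod.deriv
  have hLHS : Dop (l+1) w r = (r:ℂ)^(l+2) * ((r:ℂ)⁻¹ * deriv G r) := by
    show (r:ℂ)^(l+1+1) * Sop^[l+1] (fun r => w r / r) r = _
    rw [Function.iterate_succ_apply']
    rfl
  have hval : Dop l w r = (r:ℂ)^(l+1) * G r := rfl
  rw [hLHS, hder, hval]
  simp only [pow_succ, pow_one]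
  field_simp
  ring

lemma main {w : ℝ → ℂ} (hw : ContDiffOn ℝ (⊤ : ℕ∞) w (Ioi (0:ℝ))) (l : ℕ) :
    ∀ r ∈ Ioi (0:ℝ), Tl l (Dop l w) r = Dop l (fun s => -(deriv (deriv w) s)) r := by
  have hw2 : ContDiffOn ℝ (⊤ : ℕ∞) (fun s => -(deriv (deriv w) s)) (Ioi (0:ℝ)) :=
    (smooth_deriv (smooth_deriv hw)).neg
  induction l with
  | zero =>
    intro r hr
    have hx : (r:ℂ) ≠ 0 := Complex.ofReal_ne_zero.mpr (ne_of_gt hr)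
    have hev : Dop 0 w =ᶠ[nhds r] w := by
      filter_upwards [isOpen_Ioi.mem_nhds hr] with s hs
      have hx' : (s:ℂ) ≠ 0 := Complex.ofReal_ne_zero.mpr (ne_of_gt hs)
      show (s:ℂ)^(0+1) * (w s / s) = w s
      field_simp
      ring
    have h2 : deriv (deriv (Dop 0 w)) r = deriv (deriv w) r := hev.deriv.deriv_eq
    have h3 : Dop 0 (fun s => -(deriv (deriv w) s)) r = -(deriv (deriv w) r) := by
      show (r:ℂ)^(0+1) * (-(deriv (deriv w) r) / r) = _
      field_simp
      ring
    simp only [Tl, h2, h3, Nat.cast_zero, zero_mul, zero_div, zero_add, add_zero]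
  | succ l IH =>
    intro r hr
    have hr0 : r ≠ 0 := ne_of_gt hr
    have hx : (r:ℂ) ≠ 0 := Complex.ofReal_ne_zero.mpr hr0
    have hu : ContDiffOn ℝ (⊤ : ℕ∞) (Dop l w) (Ioi 0) := smooth_Dop hw l
    have hu1 : ContDiffOn ℝ (⊤ : ℕ∞) (deriv (Dop l w)) (Ioi 0) := smooth_deriv hu
    have hu2 : ContDiffOn ℝ (⊤ : ℕ∞) (deriv (deriv (Dop l w))) (Ioi 0) := smooth_deriv hu1
    have hub : ContDiffOn ℝ (⊤ : ℕ∞) (Dop l (fun s => -(deriv (deriv w) s))) (Ioi 0) :=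
      smooth_Dop hw2 l
    have hB : ∀ s ∈ Ioi (0:ℝ), Dop (l+1) w s
        = deriv (Dop l w) s - ((l:ℂ)+1) * ((s:ℂ)^1)⁻¹ * Dop l w s :=
      fun s hs => Dop_succ hw l hs
    have hIH : ∀ s ∈ Ioi (0:ℝ), Dop l (fun s => -(deriv (deriv w) s)) s
        = -(deriv (deriv (Dop l w)) s)
          + ((l:ℂ)*((l:ℂ)+1)) * ((s:ℂ)^2)⁻¹ * Dop l w s := by
      intro s hs
      rw [← IH s hs]
      simp only [Tl]
      ring
    have hφ : ∀ s ∈ Ioi (0:ℝ), deriv (Dop (l+1) w) s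
        = deriv (deriv (Dop l w)) s
          - ((l:ℂ)+1) * ((s:ℂ)^1)⁻¹ * deriv (Dop l w) s
          + ((l:ℂ)+1) * ((s:ℂ)^2)⁻¹ * Dop l w s := by
      intro s hs
      have hBev : Dop (l+1) w =ᶠ[nhds s]
          (fun t : ℝ => deriv (Dop l w) t - ((l:ℂ)+1) * ((t:ℂ)^1)⁻¹ * Dop l w t) :=
        Filter.eventuallyEq_of_mem (isOpen_Ioi.mem_nhds hs) (fun t ht => hB t ht)
      have hD := (hda hu1 hs).sub (aux_hda ((l:ℂ)+1) 0 (ne_of_gt hs) (hda hu hs))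
      exact hBev.deriv_eq.trans (hD.deriv.trans (by push_cast; ring))
    have hE : deriv (deriv (Dop (l+1) w)) r
        = deriv (deriv (deriv (Dop l w))) r
          - ((l:ℂ)+1) * ((r:ℂ)^1)⁻¹ * deriv (deriv (Dop l w)) r
          + 2*((l:ℂ)+1) * ((r:ℂ)^2)⁻¹ * deriv (Dop l w) r
          - 2*((l:ℂ)+1) * ((r:ℂ)^3)⁻¹ * Dop l w r := by
      have hEev : deriv (Dop (l+1) w) =ᶠ[nhds r]
          (fun t : ℝ => deriv (deriv (Dop l w)) t
            - ((l:ℂ)+1) * ((t:ℂ)^1)⁻¹ * deriv (Dop l w) t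
            + ((l:ℂ)+1) * ((t:ℂ)^2)⁻¹ * Dop l w t) :=
        Filter.eventuallyEq_of_mem (isOpen_Ioi.mem_nhds hr) (fun t ht => hφ t ht)
      have hD := ((hda hu2 hr).sub
          (aux_hda ((l:ℂ)+1) 0 hr0 (hda hu1 hr))).add
          (aux_hda ((l:ℂ)+1) 1 hr0 (hda hu hr))
      exact hEev.deriv_eq.trans (hD.deriv.trans (by push_cast; field_simp; ring))
    have hψ : deriv (Dop l (fun s => -(deriv (deriv w) s))) r
        = -(deriv (deriv (deriv (Dop l w))) r)
          + ((l:ℂ)*((l:ℂ)+1)) * ((r:ℂ)^2)⁻¹ * deriv (Dop l w) r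
          - 2*((l:ℂ)*((l:ℂ)+1)) * ((r:ℂ)^3)⁻¹ * Dop l w r := by
      have hIHev : Dop l (fun s => -(deriv (deriv w) s)) =ᶠ[nhds r]
          (fun t : ℝ => -(deriv (deriv (Dop l w)) t)
            + ((l:ℂ)*((l:ℂ)+1)) * ((t:ℂ)^2)⁻¹ * Dop l w t) :=
        Filter.eventuallyEq_of_mem (isOpen_Ioi.mem_nhds hr) (fun t ht => hIH t ht)
      have hD := ((hda hu2 hr).neg).add
          (aux_hda ((l:ℂ)*((l:ℂ)+1)) 1 hr0 (hda hu hr))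
      exact hIHev.deriv_eq.trans (hD.deriv.trans (by push_cast; field_simp; ring))
    have hR := Dop_succ hw2 l hr
    simp only [Tl]
    rw [hE, hB r hr, hR, hψ, hIH r hr]
    push_cast
    field_simp
    ring

/-- Intertwining relation `T_l (D_l w) = D_l (T_0 w)` on `(0, ∞)`. -/
theorem intertwining (l : ℕ) (hl : 1 ≤ l) (w : ℝ → ℂ)
    (hw : ContDiffOn ℝ (⊤ : ℕ∞) w (Set.Ioi (0 : ℝ))) :
    ∀ r ∈ Set.Ioi (0 : ℝ),
      Tl l (Dop l w) r = Dop l (fun s => -(deriv (deriv w) s)) r :=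
  main hw l
end

section
/- For any z ∈ ℂ and k = 0,…,5, the function u(r) = D_l exp(i e^{iπk/3} z r) satisfies the sixth-order equation (T_l)³ u = z⁶ u on (0,∞). -/
open Complex

/-! With `A_a = d/dr - a/r` and `A_a^† = -d/dr - a/r` one has `T_a = A_a A_a^†` and
`T_{a-1} = A_a^† A_a`, hence the intertwining `T_a A_a = A_a T_{a-1}`. On `(0, ∞)` the operator
`D_l` factors as `A_l ⋯ A_1`, so `T_l D_l = D_l T_0` on smooth functions, and `D_l` maps
eigenfunctions of `T_0 = -d²/dr²` to eigenfunctions of `T_l` with the same eigenvalue.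
For `w(r) = exp(i ζ z r)` with `ζ⁶ = 1` that eigenvalue is `(ζ z)²`, whose cube is `z⁶`. -/

open Set
open scoped ContDiff

noncomputable def raiseOp (a : ℕ) (u : ℝ → ℂ) : ℝ → ℂ :=
  fun r => deriv u r - (a : ℂ) / r * u r

noncomputable def lowerOp (a : ℕ) (u : ℝ → ℂ) : ℝ → ℂ :=
  fun r => -deriv u r - (a : ℂ) / r * u r

section Operators

variable {u v : ℝ → ℂ} {s : Set ℝ}

lemma Tl_congr (l : ℕ) (hs : IsOpen s) (h : EqOn u v s) : EqOn (Tl l u) (Tl l v) s := by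
  intro r hr
  simp only [Tl, (h.deriv hs).deriv hs hr, h hr]

lemma raiseOp_congr (a : ℕ) (hs : IsOpen s) (h : EqOn u v s) :
    EqOn (raiseOp a u) (raiseOp a v) s := by
  intro r hr
  simp only [raiseOp, h.deriv hs hr, h hr]

lemma Tl_const_mul (l : ℕ) (μ : ℂ) (u : ℝ → ℂ) (r : ℝ) :
    Tl l (fun x => μ * u x) r = μ * Tl l u r := by
  simp only [Tl, deriv_const_mul_field']
  ring

lemma raiseOp_const_mul (a : ℕ) (μ : ℂ) (u : ℝ → ℂ) (r : ℝ) :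
    raiseOp a (fun x => μ * u x) r = μ * raiseOp a u r := by
  simp only [raiseOp, deriv_const_mul_field']
  ring

lemma HasDerivAt.div_ofReal_mul {u' : ℂ} {r : ℝ} (hu : HasDerivAt u u' r) (hr : r ≠ 0) (b : ℂ) :
    HasDerivAt (fun x : ℝ => b / x * u x) (b / r * u' - b / r ^ 2 * u r) r := by
  have hr' : (r : ℂ) ≠ 0 := Complex.ofReal_ne_zero.mpr hr
  have hinv : HasDerivAt (fun x : ℝ => b / (x : ℂ)) (-(b / r ^ 2)) r := by
    simpa [div_eq_mul_inv] using (hasDerivAt_inv hr').comp_ofReal.const_mul b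
  exact (hinv.mul hu).congr_deriv (by ring)

variable {r : ℝ}

lemma raiseOp_lowerOp (a : ℕ) (hr : r ≠ 0) (hu : DifferentiableAt ℝ u r)
    (hu' : DifferentiableAt ℝ (deriv u) r) : raiseOp a (lowerOp a u) r = Tl a u r := by
  have h : HasDerivAt (lowerOp a u)
      (-deriv (deriv u) r - (a / r * deriv u r - a / r ^ 2 * u r)) r :=
    hu'.hasDerivAt.neg.sub (hu.hasDerivAt.div_ofReal_mul hr a)
  simp only [raiseOp, h.deriv, lowerOp, Tl]
  ring

lemma lowerOp_raiseOp (a : ℕ) (hr : r ≠ 0) (hu : DifferentiableAt ℝ u r)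
    (hu' : DifferentiableAt ℝ (deriv u) r) :
    lowerOp (a + 1) (raiseOp (a + 1) u) r = Tl a u r := by
  have h : HasDerivAt (raiseOp (a + 1) u)
      (deriv (deriv u) r - ((a + 1 : ℕ) / r * deriv u r - (a + 1 : ℕ) / r ^ 2 * u r)) r :=
    hu'.hasDerivAt.sub (hu.hasDerivAt.div_ofReal_mul hr _)
  simp only [lowerOp, h.deriv, raiseOp, Tl]
  push_cast
  ring

end Operators

section Smooth

variable {u : ℝ → ℂ}

lemma contDiffOn_ofReal_inv : ContDiffOn ℝ ∞ (fun r : ℝ => (r : ℂ)⁻¹) (Ioi 0) :=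
  (Complex.ofRealCLM.contDiff.contDiffOn).inv fun _ hr => Complex.ofReal_ne_zero.mpr hr.ne'

lemma ContDiffOn.deriv_Ioi (hu : ContDiffOn ℝ ∞ u (Ioi 0)) : ContDiffOn ℝ ∞ (deriv u) (Ioi 0) :=
  hu.deriv_of_isOpen isOpen_Ioi (by simp)

lemma ContDiffOn.differentiableAt_Ioi (hu : ContDiffOn ℝ ∞ u (Ioi 0)) {r : ℝ} (hr : 0 < r) :
    DifferentiableAt ℝ u r :=
  (hu.differentiableOn (by simp) r hr).differentiableAt (isOpen_Ioi.mem_nhds hr)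

lemma ContDiffOn.raiseOp (a : ℕ) (hu : ContDiffOn ℝ ∞ u (Ioi 0)) :
    ContDiffOn ℝ ∞ (raiseOp a u) (Ioi 0) := by
  unfold _root_.raiseOp
  simp only [div_eq_mul_inv]
  exact hu.deriv_Ioi.sub ((contDiffOn_const.mul contDiffOn_ofReal_inv).mul hu)

lemma ContDiffOn.iterate_inv_mul_deriv (hu : ContDiffOn ℝ ∞ u (Ioi 0)) (l : ℕ) :
    ContDiffOn ℝ ∞ ((fun f : ℝ → ℂ => fun r => (r : ℂ)⁻¹ * deriv f r)^[l] u) (Ioi 0) := by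
  induction l with
  | zero => exact hu
  | succ l ih =>
    rw [Function.iterate_succ_apply']
    exact contDiffOn_ofReal_inv.mul ih.deriv_Ioi

end Smooth

section RadialOperators

variable {u w : ℝ → ℂ}

lemma Dop_zero_eqOn (w : ℝ → ℂ) : EqOn (Dop 0 w) w (Ioi 0) := by
  intro r hr
  have hr' : (r : ℂ) ≠ 0 := Complex.ofReal_ne_zero.mpr hr.ne'
  simp only [Dop, Function.iterate_zero, id_eq, zero_add, pow_one]
  field_simp

lemma Dop_succ_eqOn (hw : ContDiffOn ℝ ∞ w (Ioi 0)) (l : ℕ) :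
    EqOn (Dop (l + 1) w) (raiseOp (l + 1) (Dop l w)) (Ioi 0) := by
  intro r hr
  set F := (fun f : ℝ → ℂ => fun r => (r : ℂ)⁻¹ * deriv f r)^[l] (fun r => w r / r)
  have hF : ContDiffOn ℝ ∞ F (Ioi 0) := by
    simp only [F, div_eq_mul_inv]
    exact (hw.mul contDiffOn_ofReal_inv).iterate_inv_mul_deriv l
  have hDop : Dop l w = fun x : ℝ => (x : ℂ) ^ (l + 1) * F x := rfl
  have h : HasDerivAt (Dop l w)
      (((l + 1 : ℕ) : ℂ) * (r : ℂ) ^ l * F r + (r : ℂ) ^ (l + 1) * deriv F r) r :=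
    ((hasDerivAt_pow (l + 1) (r : ℂ)).comp_ofReal.mul (hF.differentiableAt_Ioi hr).hasDerivAt)
  have hsucc : Dop (l + 1) w r = (r : ℂ) ^ (l + 2) * ((r : ℂ)⁻¹ * deriv F r) := by
    simp only [Dop, Function.iterate_succ_apply', F]
  have hr' : (r : ℂ) ≠ 0 := Complex.ofReal_ne_zero.mpr hr.ne'
  rw [hsucc, raiseOp, h.deriv, hDop]
  field_simp
  push_cast
  ring

lemma ContDiffOn.Dop (hw : ContDiffOn ℝ ∞ w (Ioi 0)) (l : ℕ) : ContDiffOn ℝ ∞ (Dop l w) (Ioi 0) := by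
  unfold _root_.Dop
  simp only [div_eq_mul_inv]
  exact (Complex.ofRealCLM.contDiff.pow (l + 1)).contDiffOn.mul
    ((hw.mul contDiffOn_ofReal_inv).iterate_inv_mul_deriv l)

lemma Tl_raiseOp_eqOn (a : ℕ) (hu : ContDiffOn ℝ ∞ u (Ioi 0)) :
    EqOn (Tl (a + 1) (raiseOp (a + 1) u)) (raiseOp (a + 1) (Tl a u)) (Ioi 0) := by
  intro r hr
  have hv := hu.raiseOp (a + 1)
  rw [← raiseOp_lowerOp (a + 1) hr.ne' (hv.differentiableAt_Ioi hr)
    (hv.deriv_Ioi.differentiableAt_Ioi hr)]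
  refine raiseOp_congr (a + 1) isOpen_Ioi (fun x hx => ?_) hr
  exact lowerOp_raiseOp a (ne_of_gt hx) (hu.differentiableAt_Ioi hx)
    (hu.deriv_Ioi.differentiableAt_Ioi hx)

theorem Tl_Dop_eqOn_of_Tl_zero_eqOn {μ : ℂ} (hw : ContDiffOn ℝ ∞ w (Ioi 0))
    (hμ : EqOn (Tl 0 w) (fun r => μ * w r) (Ioi 0)) (l : ℕ) :
    EqOn (Tl l (Dop l w)) (fun r => μ * Dop l w r) (Ioi 0) := by
  induction l with
  | zero =>
    intro r hr
    dsimp only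
    rw [Tl_congr 0 isOpen_Ioi (Dop_zero_eqOn w) hr, hμ hr, Dop_zero_eqOn w hr]
  | succ l ih =>
    intro r hr
    dsimp only
    rw [Tl_congr (l + 1) isOpen_Ioi (Dop_succ_eqOn hw l) hr, Tl_raiseOp_eqOn l (hw.Dop l) hr,
      raiseOp_congr (l + 1) isOpen_Ioi ih hr, raiseOp_const_mul, Dop_succ_eqOn hw l hr]

lemma iterate_Tl_eqOn {l : ℕ} {μ : ℂ} (h : EqOn (Tl l u) (fun r => μ * u r) (Ioi 0)) (n : ℕ) :
    EqOn ((Tl l)^[n] u) (fun r => μ ^ n * u r) (Ioi 0) := by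
  induction n with
  | zero => intro r _; simp
  | succ n ih =>
    intro r hr
    rw [Function.iterate_succ_apply', Tl_congr l isOpen_Ioi ih hr, Tl_const_mul, h hr]
    ring

end RadialOperators

lemma contDiff_cexp_mul (c : ℂ) : ContDiff ℝ ∞ fun s : ℝ => Complex.exp (c * s) :=
  (contDiff_const.mul Complex.ofRealCLM.contDiff).cexp

lemma Tl_zero_cexp_mul (c : ℂ) (r : ℝ) :
    Tl 0 (fun s : ℝ => Complex.exp (c * s)) r = -c ^ 2 * Complex.exp (c * r) := by
  have h : ∀ s : ℝ, HasDerivAt (fun s : ℝ => Complex.exp (c * s)) (c * Complex.exp (c * s)) s :=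
    fun s => by simpa [mul_comm] using ((hasDerivAt_id s).ofReal_comp.const_mul c).cexp
  have h' : deriv (fun s : ℝ => Complex.exp (c * s)) = fun s : ℝ => c * Complex.exp (c * s) :=
    funext fun s => (h s).deriv
  simp only [Tl, h', deriv_const_mul_field', (h r).deriv]
  ring

theorem sixth_order_eigen_general (l : ℕ) (z : ℂ) (k : ℕ) :
    ∀ r ∈ Set.Ioi (0 : ℝ),
      (Tl l)^[3] (Dop l (fun s : ℝ =>
          Complex.exp (Complex.I * Complex.exp (Complex.I * Real.pi * k / 3) * z * s))) r
        = z ^ 6 * Dop l (fun s : ℝ =>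
            Complex.exp (Complex.I * Complex.exp (Complex.I * Real.pi * k / 3) * z * s)) r := by
  set ζ := Complex.exp (Complex.I * Real.pi * k / 3)
  have hζ : ζ ^ 6 = 1 := by
    rw [← Complex.exp_nat_mul, show ((6 : ℕ) : ℂ) * (Complex.I * Real.pi * k / 3)
      = (k : ℤ) * (2 * Real.pi * Complex.I) by push_cast; ring]
    exact Complex.exp_int_mul_two_pi_mul_I k
  have hc : (-(Complex.I * ζ * z) ^ 2) ^ 3 = z ^ 6 := by
    calc (-(Complex.I * ζ * z) ^ 2) ^ 3 = -(Complex.I ^ 2) ^ 3 * ζ ^ 6 * z ^ 6 := by ring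
      _ = z ^ 6 := by rw [Complex.I_sq, hζ]; ring
  intro r hr
  rw [← hc]
  exact iterate_Tl_eqOn (Tl_Dop_eqOn_of_Tl_zero_eqOn (contDiff_cexp_mul _).contDiffOn
    (fun r _ => Tl_zero_cexp_mul _ r) l) 3 hr

/-- For `k = 0,…,5`, `u = D_l exp(i e^{iπk/3} z r)` satisfies `(T_l)³ u = z⁶ u` on `(0,∞)`. -/
theorem sixth_order_eigen (l : ℕ) (hl : 1 ≤ l) (z : ℂ) (k : ℕ) (hk : k ≤ 5) :
    ∀ r ∈ Set.Ioi (0 : ℝ),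
      (Tl l)^[3] (Dop l (fun s : ℝ =>
          Complex.exp (Complex.I * Complex.exp (Complex.I * Real.pi * k / 3) * z * s))) r
        = z ^ 6 * Dop l (fun s : ℝ =>
            Complex.exp (Complex.I * Complex.exp (Complex.I * Real.pi * k / 3) * z * s)) r :=
  sixth_order_eigen_general l z k
end

section
/- For l = 1 and κ < 0, the function v(r) = sqrt(-3/(2κ)) · D_1( exp(2κr/3) + exp(-2πi/3) exp((2/3)e^{-iπ/3} κ r) + exp(2πi/3) exp((2/3)e^{iπ/3} κ r) ) is real-valued for r > 0 and satisfies (T_1)³ v = z_p⁶ v with z_p = -(2/3) e^{iπ/6} κ, i.e. the eigenvalue z_p⁶ = -(2κ/3)⁶ · e^{iπ} = -(2|κ|/3)⁶ is negative. -/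
/-!
`D₁ e^{at} = e^{at} (a - 1/t)` is an eigenfunction of `T₁` with eigenvalue `-a²`, so `T₁³`
multiplies it by `-a⁶`. The three exponents of `v` are `a = (2κ/3) ω` with `ω⁶ = 1`, so all three
modes have the same eigenvalue `-(2κ/3)⁶ = z_p⁶`. The second and third modes are complex conjugates
of each other and the first is real, hence `v` is real.
-/

open Complex

open ComplexConjugate

noncomputable def expMode (a : ℂ) (r : ℝ) : ℂ := exp (a * r) * (a - (r : ℂ)⁻¹)

lemma hasDerivAt_cexp_mul_ofReal (a : ℂ) (r : ℝ) :
    HasDerivAt (fun s : ℝ => exp (a * s)) (exp (a * r) * a) r := by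
  simpa using ((hasDerivAt_id r).ofReal_comp.const_mul a).cexp

lemma hasDerivAt_ofReal_inv {r : ℝ} (hr : r ≠ 0) :
    HasDerivAt (fun s : ℝ => (s : ℂ)⁻¹) (-(r : ℂ)⁻¹ ^ 2) r := by
  convert (hasDerivAt_inv (ofReal_ne_zero.mpr hr)).comp_ofReal using 1
  rw [inv_pow]

lemma hasDerivAt_expMode (a : ℂ) {r : ℝ} (hr : r ≠ 0) :
    HasDerivAt (expMode a) (exp (a * r) * (a ^ 2 - a * (r : ℂ)⁻¹ + (r : ℂ)⁻¹ ^ 2)) r := by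
  refine ((hasDerivAt_cexp_mul_ofReal a r).mul
    ((hasDerivAt_const r a).sub (hasDerivAt_ofReal_inv hr))).congr_deriv ?_
  simp only [Pi.sub_apply]
  ring

lemma hasDerivAt_expMode_deriv (a : ℂ) {r : ℝ} (hr : r ≠ 0) :
    HasDerivAt (fun s : ℝ => exp (a * s) * (a ^ 2 - a * (s : ℂ)⁻¹ + (s : ℂ)⁻¹ ^ 2))
      (exp (a * r) *
        (a ^ 3 - a ^ 2 * (r : ℂ)⁻¹ + 2 * a * (r : ℂ)⁻¹ ^ 2 - 2 * (r : ℂ)⁻¹ ^ 3)) r := by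
  have hinv := hasDerivAt_ofReal_inv hr
  refine ((hasDerivAt_cexp_mul_ofReal a r).mul
    (((hasDerivAt_const r (a ^ 2)).sub (hinv.const_mul a)).add (hinv.pow 2))).congr_deriv ?_
  simp only [Pi.add_apply, Pi.sub_apply, Pi.pow_apply, Nat.cast_ofNat]
  ring

lemma conj_expMode (a : ℂ) (r : ℝ) : conj (expMode a r) = expMode (conj a) r := by
  simp [expMode, ← exp_conj]

section Superposition

variable {ι : Type*} (s : Finset ι) (c a : ι → ℂ)

lemma Dop_one_sum_cexp {r : ℝ} (hr : r ≠ 0) :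
    Dop 1 (fun t => ∑ i ∈ s, c i * exp (a i * t)) r = ∑ i ∈ s, c i * expMode (a i) r := by
  have hw : HasDerivAt (fun t : ℝ => ∑ i ∈ s, c i * exp (a i * t))
      (∑ i ∈ s, c i * (exp (a i * r) * a i)) r :=
    HasDerivAt.fun_sum fun i _ => (hasDerivAt_cexp_mul_ofReal (a i) r).const_mul (c i)
  have hquot := hw.fun_div (hasDerivAt_id' r).ofReal_comp (ofReal_ne_zero.mpr hr)
  change (r : ℂ) ^ 2 * ((r : ℂ)⁻¹ * deriv (fun t : ℝ => (∑ i ∈ s, c i * exp (a i * t)) / t) r) = _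
  rw [hquot.deriv]
  have hr' : (r : ℂ) ≠ 0 := ofReal_ne_zero.mpr hr
  simp only [expMode, mul_sub, Finset.sum_sub_distrib, ← mul_assoc, ← Finset.sum_mul, ofReal_one]
  field_simp

variable {s c a}

lemma Tl_one_of_eqOn_sum_expMode {f : ℝ → ℂ}
    (hf : ∀ t ≠ 0, f t = ∑ i ∈ s, c i * expMode (a i) t) {r : ℝ} (hr : r ≠ 0) :
    Tl 1 f r = ∑ i ∈ s, c i * -a i ^ 2 * expMode (a i) r := by
  have hnhds : {t : ℝ | t ≠ 0} ∈ nhds r := isOpen_compl_singleton.mem_nhds hr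
  have hderiv : deriv f =ᶠ[nhds r]
      fun t => ∑ i ∈ s, c i * (exp (a i * t) * (a i ^ 2 - a i * (t : ℂ)⁻¹ + (t : ℂ)⁻¹ ^ 2)) := by
    have hf' : f =ᶠ[nhds r] fun t => ∑ i ∈ s, c i * expMode (a i) t :=
      Filter.eventuallyEq_of_mem hnhds hf
    refine hf'.deriv.trans (Filter.eventuallyEq_of_mem hnhds fun t ht => ?_)
    exact (HasDerivAt.fun_sum fun i _ => (hasDerivAt_expMode (a i) ht).const_mul (c i)).deriv
  have hderiv2 := hderiv.deriv_eq.trans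
    (HasDerivAt.fun_sum fun i _ => (hasDerivAt_expMode_deriv (a i) hr).const_mul (c i)).deriv
  have hr' : (r : ℂ) ≠ 0 := ofReal_ne_zero.mpr hr
  simp only [Tl, hderiv2, hf r hr, Finset.mul_sum, ← Finset.sum_neg_distrib,
    ← Finset.sum_add_distrib]
  refine Finset.sum_congr rfl fun i _ => ?_
  simp only [expMode]
  push_cast
  field_simp
  ring

lemma iterate_Tl_one_of_eqOn_sum_expMode {f : ℝ → ℂ}
    (hf : ∀ t ≠ 0, f t = ∑ i ∈ s, c i * expMode (a i) t) (n : ℕ) :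
    ∀ t ≠ 0, (Tl 1)^[n] f t = ∑ i ∈ s, c i * (-a i ^ 2) ^ n * expMode (a i) t := by
  induction n with
  | zero => simpa using hf
  | succ n ih =>
    intro t ht
    rw [Function.iterate_succ_apply', Tl_one_of_eqOn_sum_expMode ih ht]
    simp only [pow_succ, mul_assoc]

lemma iterate_Tl_one_eq_mul_of_eqOn_sum_expMode {f : ℝ → ℂ}
    (hf : ∀ t ≠ 0, f t = ∑ i ∈ s, c i * expMode (a i) t) {n : ℕ} {μ : ℂ}
    (hμ : ∀ i ∈ s, (-a i ^ 2) ^ n = μ) {r : ℝ} (hr : r ≠ 0) :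
    (Tl 1)^[n] f r = μ * f r := by
  rw [iterate_Tl_one_of_eqOn_sum_expMode hf n r hr, hf r hr, Finset.mul_sum]
  exact Finset.sum_congr rfl fun i hi => by rw [← hμ i hi]; ring

lemma im_sum_expMode_eq_zero [Fintype ι] (σ : Equiv.Perm ι) (hc : ∀ i, conj (c i) = c (σ i))
    (ha : ∀ i, conj (a i) = a (σ i)) (r : ℝ) : (∑ i, c i * expMode (a i) r).im = 0 := by
  rw [← conj_eq_iff_im, map_sum]
  simp only [map_mul, conj_expMode, hc, ha]
  exact Equiv.sum_comp σ fun i => c i * expMode (a i) r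

end Superposition

noncomputable def modeRoot : Fin 3 → ℂ := ![1, exp (-(I * Real.pi) / 3), exp (I * Real.pi / 3)]

noncomputable def modeCoeff : Fin 3 → ℂ :=
  ![1, exp (-(2 * Real.pi * I) / 3), exp (2 * Real.pi * I / 3)]

lemma modeRoot_pow_six (i : Fin 3) : modeRoot i ^ 6 = 1 := by
  fin_cases i <;> simp only [modeRoot, Fin.zero_eta, Fin.mk_one, Fin.reduceFinMk,
    Matrix.cons_val, one_pow, ← exp_nat_mul, exp_eq_one_iff]
  · exact ⟨-1, by push_cast; ring⟩
  · exact ⟨1, by push_cast; ring⟩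

lemma conj_modeRoot (i : Fin 3) : conj (modeRoot i) = modeRoot (Equiv.swap 1 2 i) := by
  fin_cases i <;> simp [modeRoot, ← exp_conj, map_ofNat, Equiv.swap_apply_of_ne_of_ne]

lemma conj_modeCoeff (i : Fin 3) : conj (modeCoeff i) = modeCoeff (Equiv.swap 1 2 i) := by
  fin_cases i <;> simp [modeCoeff, ← exp_conj, map_ofNat, Equiv.swap_apply_of_ne_of_ne]

lemma exp_I_pi_div_six_pow_six : exp (I * Real.pi / 6) ^ 6 = -1 := by
  rw [← exp_nat_mul, ← exp_pi_mul_I]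
  push_cast
  ring_nf

theorem discrete_spectrum_l_one_general (κ : ℝ) :
    let v : ℝ → ℂ := fun r =>
      (Real.sqrt (-3 / (2 * κ)) : ℂ) *
        Dop 1 (fun s : ℝ =>
          Complex.exp (2 * κ * s / 3)
          + Complex.exp (-(2 * Real.pi * Complex.I) / 3) *
              Complex.exp ((2 / 3) * Complex.exp (-(Complex.I * Real.pi) / 3) * κ * s)
          + Complex.exp (2 * Real.pi * Complex.I / 3) *
              Complex.exp ((2 / 3) * Complex.exp (Complex.I * Real.pi / 3) * κ * s)) r
    let zp : ℂ := -(2 / 3) * Complex.exp (Complex.I * Real.pi / 6) * κ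
    (∀ r ∈ Set.Ioi (0 : ℝ), (v r).im = 0 ∧ (Tl 1)^[3] v r = zp ^ 6 * v r) ∧
      zp ^ 6 = -((2 * |κ| / 3 : ℝ) ^ 6 : ℂ) := by
  intro v zp
  set a : Fin 3 → ℂ := fun i => 2 / 3 * modeRoot i * κ
  set c : Fin 3 → ℂ := fun i => (Real.sqrt (-3 / (2 * κ)) : ℂ) * modeCoeff i
  have hv : ∀ t ≠ 0, v t = ∑ i, c i * expMode (a i) t := by
    intro t ht
    simp only [v, c, mul_assoc, ← Finset.mul_sum, ← Dop_one_sum_cexp _ _ _ ht]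
    congr 2
    funext s
    simp only [modeCoeff, modeRoot, Fin.sum_univ_three, Matrix.cons_val_zero, mul_one, one_mul,
      Matrix.cons_val_one, Matrix.cons_val, a]
    ring_nf
  have hzp : zp ^ 6 = -(2 * κ / 3 : ℂ) ^ 6 := by
    linear_combination (2 * κ / 3 : ℂ) ^ 6 * exp_I_pi_div_six_pow_six
  have heigen : ∀ i ∈ Finset.univ, (-a i ^ 2) ^ 3 = zp ^ 6 := fun i _ => by
    rw [hzp]
    linear_combination -(2 * κ / 3 : ℂ) ^ 6 * modeRoot_pow_six i
  refine ⟨fun r hr => ⟨?_, iterate_Tl_one_eq_mul_of_eqOn_sum_expMode hv heigen hr.ne'⟩, ?_⟩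
  · rw [hv r hr.ne']
    refine im_sum_expMode_eq_zero (Equiv.swap 1 2) (fun i => ?_) (fun i => ?_) r
    · simp [c, conj_modeCoeff]
    · simp [a, conj_modeRoot, map_ofNat]
  · have habs : |κ| ^ 6 = κ ^ 6 := (even_two_mul 3).pow_abs κ
    rw [hzp, ← ofReal_pow, div_pow (2 * |κ|), mul_pow 2 |κ|, habs]
    push_cast
    ring

/-- For `l = 1`, `κ < 0`, the discrete-spectrum eigenvector is real-valued and satisfies
`(T₁)³ v = z_p⁶ v` with `z_p = -(2/3) e^{iπ/6} κ` and negative eigenvalue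
`z_p⁶ = -(2|κ|/3)⁶`. -/
theorem discrete_spectrum_l_one (κ : ℝ) (hκ : κ < 0) :
    let v : ℝ → ℂ := fun r =>
      (Real.sqrt (-3 / (2 * κ)) : ℂ) *
        Dop 1 (fun s : ℝ =>
          Complex.exp (2 * κ * s / 3)
          + Complex.exp (-(2 * Real.pi * Complex.I) / 3) *
              Complex.exp ((2 / 3) * Complex.exp (-(Complex.I * Real.pi) / 3) * κ * s)
          + Complex.exp (2 * Real.pi * Complex.I / 3) *
              Complex.exp ((2 / 3) * Complex.exp (Complex.I * Real.pi / 3) * κ * s)) r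
    let zp : ℂ := -(2 / 3) * Complex.exp (Complex.I * Real.pi / 6) * κ
    (∀ r ∈ Set.Ioi (0 : ℝ), (v r).im = 0 ∧ (Tl 1)^[3] v r = zp ^ 6 * v r) ∧
      zp ^ 6 = -((2 * |κ| / 3 : ℝ) ^ 6 : ℂ) :=
  discrete_spectrum_l_one_general κ
end
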